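/- Let d, n, m, k be positive integers, and let Λ > 0, ε > 0. Let x_1,…,x_n ∈ ℝ^d be nonzero vectors, let a_1,…,a_m ∈ ℝ^d be unit vectors, and let y_1,…,y_n ∈ ℝ^m each have at most k nonzero entries and satisfy ‖y_i‖² ≤ Λ‖x_i‖². For each i let T_i be a linear subspace of ℝ^d and set z_i = x_i − Π_{T_i} x_i. Define W = Σ_i ‖x_i‖², γ_i = ‖x_i − Σ_j y_i(j) a_j‖² / ‖x_i‖², γ* = (1/W) Σ_i ‖x_i‖² γ_i, and ψ = (1/W) Σ_i ‖z_i‖². If ψ ≥ γ* + ε, then there exist an index ℓ ∈ {1,…,m} and a subset R ⊆ {1,…,n} such that ⟨z_i, a_ℓ⟩² ≥ (ε²/(16kΛ)) ‖x_i‖² for all i ∈ R, and Σ_{i∈R} ⟨z_i, a_ℓ⟩² ≥ ((ψ − γ*)²/(16mΛ)) · W. -/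

import Mathlib

/-!
Write `b i = ∑ j, y i j • a j`. As `z i ⟂ T i`, `⟪z i, x i⟫ = ‖z i‖²`, hence
`‖z i‖² - ‖x i - b i‖² ≤ 2 ⟪z i, b i⟫`, and summing gives
`∑ i j, y i j ⟪z i, a j⟫ ≥ (ψ - γ*) W / 2`. Pairs `(i, j)` with `⟪z i, a j⟫²` below the threshold
`ε² ‖x i‖² / (16 k Λ)` contribute at most `ε ‖x i‖² / 4` to row `i`, by Cauchy–Schwarz over the
at most `k` indices where `y i` is nonzero; so the pairs above the threshold carry at least
`(ψ - γ*) W / 4`. Cauchy–Schwarz over those pairs, with `∑ y² ≤ Λ W`, bounds their total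
`⟪z i, a j⟫²` below by `(ψ - γ*)² W / (16 Λ)`, and some column `ℓ` carries a `1 / m` share of it.
-/
open Finset RealInnerProductSpace

theorem Submodule.inner_sub_starProjection_self {E : Type*} [NormedAddCommGroup E]
    [InnerProductSpace ℝ E] (K : Submodule ℝ E) [K.HasOrthogonalProjection] (x : E) :
    ⟪x - K.starProjection x, x⟫ = ‖x - K.starProjection x‖ ^ 2 := by
  rw [← real_inner_self_eq_norm_sq, inner_sub_right (x - K.starProjection x),
    K.starProjection_inner_eq_zero x _ (K.starProjection_apply_mem x), sub_zero]

theorem norm_sq_sub_norm_sub_sq_le_two_mul_inner {E : Type*} [NormedAddCommGroup E]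
    [InnerProductSpace ℝ E] {z x : E} (h : ⟪z, x⟫ = ‖z‖ ^ 2) (b : E) :
    ‖z‖ ^ 2 - ‖x - b‖ ^ 2 ≤ 2 * ⟪z, b⟫ := by
  have := norm_sub_sq_real z (x - b)
  rw [inner_sub_right, h] at this
  linarith [sq_nonneg ‖z - (x - b)‖]

section Thresholding

variable {ι κ : Type*} [Fintype ι] [Fintype κ]

theorem sq_sum_filter_sq_lt_le (y c : κ → ℝ) {k : ℕ} (hk : {j | y j ≠ 0}.ncard ≤ k)
    {t : ℝ} (ht : 0 ≤ t) :
    (∑ j with c j ^ 2 < t, y j * c j) ^ 2 ≤ k * t * ∑ j, y j ^ 2 := by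
  classical
  set S : Finset κ := {j | c j ^ 2 < t ∧ y j ≠ 0}
  have hsum : ∑ j with c j ^ 2 < t, y j * c j = ∑ j ∈ S, y j * c j := by
    rw [← sum_filter_of_ne (p := fun j => y j ≠ 0) fun j _ h => left_ne_zero_of_mul h,
      filter_filter]
  have hcard : (#S : ℝ) ≤ k := by
    rw [Set.ncard_eq_toFinset_card', Set.toFinset_ofPred] at hk
    exact_mod_cast (card_le_card <| monotone_filter_right _ fun _ _ => And.right).trans hk
  have hc : ∑ j ∈ S, c j ^ 2 ≤ k * t := by
    refine (sum_le_card_nsmul S _ t fun j hj => (mem_filter.1 hj).2.1.le).trans ?_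
    rw [nsmul_eq_mul]
    exact mul_le_mul_of_nonneg_right hcard ht
  calc (∑ j with c j ^ 2 < t, y j * c j) ^ 2
      ≤ (∑ j ∈ S, y j ^ 2) * ∑ j ∈ S, c j ^ 2 := hsum ▸ sum_mul_sq_le_sq_mul_sq S y c
    _ ≤ (∑ j, y j ^ 2) * (k * t) :=
      mul_le_mul (sum_le_univ_sum_of_nonneg fun j => sq_nonneg _) hc
        (sum_nonneg fun j _ => sq_nonneg _) (sum_nonneg fun j _ => sq_nonneg _)
    _ = k * t * ∑ j, y j ^ 2 := mul_comm _ _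

theorem sum_filter_sq_lt_le (y c : κ → ℝ) {k : ℕ} (hk : {j | y j ≠ 0}.ncard ≤ k) (hk0 : 0 < k)
    {Λ ε w : ℝ} (hΛ : 0 < Λ) (hε : 0 ≤ ε) (hy : ∑ j, y j ^ 2 ≤ Λ * w) :
    ∑ j with c j ^ 2 < ε ^ 2 / (16 * k * Λ) * w, y j * c j ≤ ε / 4 * w := by
  have hw : 0 ≤ w := nonneg_of_mul_nonneg_right ((sum_nonneg fun j _ => sq_nonneg _).trans hy) hΛ
  have hk0' : (0 : ℝ) < k := Nat.cast_pos.2 hk0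
  refine le_of_abs_le (abs_le_of_sq_le_sq ?_ (by positivity))
  calc _ ≤ k * (ε ^ 2 / (16 * k * Λ) * w) * ∑ j, y j ^ 2 :=
        sq_sum_filter_sq_lt_le y c hk (by positivity)
    _ ≤ k * (ε ^ 2 / (16 * k * Λ) * w) * (Λ * w) := by gcongr
    _ = (ε / 4 * w) ^ 2 := by field_simp; ring

theorem sq_sum_sum_filter_le (y c : ι → κ → ℝ) (t : ι → ℝ) :
    (∑ i, ∑ j with t i ≤ c i j ^ 2, y i j * c i j) ^ 2 ≤
      (∑ i, ∑ j, y i j ^ 2) * ∑ j, ∑ i with t i ≤ c i j ^ 2, c i j ^ 2 := by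
  set P : Finset (ι × κ) := {p | t p.1 ≤ c p.1 p.2 ^ 2}
  have hrows (f : ι → κ → ℝ) : ∑ i, ∑ j with t i ≤ c i j ^ 2, f i j = ∑ p ∈ P, f p.1 p.2 := by
    simp only [P, sum_filter, Fintype.sum_prod_type]
  have hcols (f : ι → κ → ℝ) : ∑ j, ∑ i with t i ≤ c i j ^ 2, f i j = ∑ p ∈ P, f p.1 p.2 := by
    simp only [P, sum_filter, Fintype.sum_prod_type_right]
  rw [hrows, hcols, ← Fintype.sum_prod_type']
  exact (sum_mul_sq_le_sq_mul_sq P _ _).trans <| mul_le_mul_of_nonneg_right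
    (sum_le_univ_sum_of_nonneg fun p => sq_nonneg _) (sum_nonneg fun p _ => sq_nonneg _)

theorem exists_column_of_le_sum_mul [Nonempty κ] (w : ι → ℝ) (y c : ι → κ → ℝ) {k : ℕ}
    {Λ ε δ : ℝ} (hk : 0 < k) (hΛ : 0 < Λ) (hε : 0 < ε) (hεδ : ε ≤ δ)
    (hsparse : ∀ i, {j | y i j ≠ 0}.ncard ≤ k) (hy : ∀ i, ∑ j, y i j ^ 2 ≤ Λ * w i)
    (hcorr : δ / 2 * ∑ i, w i ≤ ∑ i, ∑ j, y i j * c i j) :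
    ∃ (ℓ : κ) (R : Finset ι), (∀ i ∈ R, ε ^ 2 / (16 * k * Λ) * w i ≤ c i ℓ ^ 2) ∧
      δ ^ 2 / (16 * Fintype.card κ * Λ) * ∑ i, w i ≤ ∑ i ∈ R, c i ℓ ^ 2 := by
  set τ := ε ^ 2 / (16 * k * Λ)
  set W := ∑ i, w i
  set score : κ → ℝ := fun j => ∑ i with τ * w i ≤ c i j ^ 2, c i j ^ 2
  have hw (i : ι) : 0 ≤ w i :=
    nonneg_of_mul_nonneg_right ((sum_nonneg fun j _ => sq_nonneg _).trans (hy i)) hΛ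
  have hW : 0 ≤ W := sum_nonneg fun i _ => hw i
  have hbig : δ / 4 * W ≤ ∑ i, ∑ j with τ * w i ≤ c i j ^ 2, y i j * c i j := by
    have hsmall : ∑ i, ∑ j with c i j ^ 2 < τ * w i, y i j * c i j ≤ ε / 4 * W := by
      rw [mul_sum]
      exact sum_le_sum fun i _ => sum_filter_sq_lt_le _ _ (hsparse i) hk hΛ hε.le (hy i)
    have hsplit : ∑ i, ∑ j, y i j * c i j = ∑ i, ∑ j with τ * w i ≤ c i j ^ 2, y i j * c i j +
        ∑ i, ∑ j with c i j ^ 2 < τ * w i, y i j * c i j := by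
      simp_rw [← sum_add_distrib, ← not_le, sum_filter_add_sum_filter_not]
    have hεW : ε / 4 * W ≤ δ / 4 * W := by gcongr
    linarith
  have hscore : δ ^ 2 / (16 * Λ) * W ≤ ∑ j, score j := by
    have hCS := (pow_le_pow_left₀ (mul_nonneg (by linarith) hW) hbig 2).trans
      ((sq_sum_sum_filter_le y c (τ * w ·)).trans
        (mul_le_mul_of_nonneg_right ((sum_le_sum fun i _ => hy i).trans_eq (mul_sum ..).symm)
          (sum_nonneg fun j _ => sum_nonneg fun i _ => sq_nonneg _)))
    rcases hW.eq_or_lt with hW0 | hW0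
    · rw [← hW0, mul_zero]; exact sum_nonneg fun j _ => sum_nonneg fun i _ => sq_nonneg _
    · rw [div_mul_eq_mul_div, div_le_iff₀ (by positivity)]
      nlinarith
  obtain ⟨ℓ, -, hℓ⟩ := exists_le_of_le_expect univ_nonempty
    (Fintype.expect_eq_sum_div_card score ▸ div_le_div_of_nonneg_right hscore (Nat.cast_nonneg _))
  refine ⟨ℓ, ({i | τ * w i ≤ c i ℓ ^ 2} : Finset ι), fun i hi => (mem_filter.1 hi).2, ?_⟩
  calc δ ^ 2 / (16 * Fintype.card κ * Λ) * W = δ ^ 2 / (16 * Λ) * W / Fintype.card κ := by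
        field_simp
    _ ≤ score ℓ := hℓ

end Thresholding

theorem stmt_9_general (d n m k : ℕ) (hn : 0 < n) (hm : 0 < m) (hk : 0 < k)
    (Λ ε : ℝ) (hΛ : 0 < Λ) (hε : 0 < ε)
    (x : Fin n → EuclideanSpace ℝ (Fin d)) (hx : ∀ i, x i ≠ 0)
    (a : Fin m → EuclideanSpace ℝ (Fin d))
    (y : Fin n → Fin m → ℝ)
    (hysparse : ∀ i, {j | y i j ≠ 0}.ncard ≤ k)
    (hynorm : ∀ i, ∑ j, (y i j) ^ 2 ≤ Λ * ‖x i‖ ^ 2)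
    (T : Fin n → Submodule ℝ (EuclideanSpace ℝ (Fin d)))
    (z : Fin n → EuclideanSpace ℝ (Fin d))
    (hz : ∀ i, z i = x i - (Submodule.orthogonalProjection (T i) (x i) : EuclideanSpace ℝ (Fin d)))
    (W : ℝ) (hW : W = ∑ i, ‖x i‖ ^ 2)
    (γ : Fin n → ℝ) (hγ : ∀ i, γ i = ‖x i - ∑ j, y i j • a j‖ ^ 2 / ‖x i‖ ^ 2)
    (γs : ℝ) (hγs : γs = (1 / W) * ∑ i, ‖x i‖ ^ 2 * γ i)
    (ψ : ℝ) (hψ : ψ = (1 / W) * ∑ i, ‖z i‖ ^ 2)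
    (hlarge : ψ ≥ γs + ε) :
    ∃ (ℓ : Fin m) (R : Finset (Fin n)),
      (∀ i ∈ R, (inner ℝ (z i) (a ℓ) : ℝ) ^ 2 ≥ (ε ^ 2 / (16 * k * Λ)) * ‖x i‖ ^ 2) ∧
      ∑ i ∈ R, (inner ℝ (z i) (a ℓ) : ℝ) ^ 2 ≥ ((ψ - γs) ^ 2 / (16 * m * Λ)) * W := by
  have hx2 (i : Fin n) : 0 < ‖x i‖ ^ 2 := by positivity [hx i]
  have hW0 : 0 < W := hW ▸ sum_pos (fun i _ => hx2 i) (univ_nonempty_iff.2 ⟨⟨0, hn⟩⟩)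
  have hzx (i : Fin n) : ⟪z i, x i⟫ = ‖z i‖ ^ 2 := hz i ▸ (T i).inner_sub_starProjection_self (x i)
  have hγW : ∑ i, ‖x i - ∑ j, y i j • a j‖ ^ 2 = γs * W := by
    simp_rw [hγs, hγ, mul_div_cancel₀ _ (hx2 _).ne']
    field_simp
  have hψW : ∑ i, ‖z i‖ ^ 2 = ψ * W := by rw [hψ]; field_simp
  have hcorr : (ψ - γs) / 2 * ∑ i, ‖x i‖ ^ 2 ≤ ∑ i, ∑ j, y i j * ⟪z i, a j⟫ := by
    have := sum_le_sum fun i (_ : i ∈ univ) =>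
      norm_sq_sub_norm_sub_sq_le_two_mul_inner (hzx i) (∑ j, y i j • a j)
    simp only [sum_sub_distrib, hγW, hψW, ← mul_sum, inner_sum, real_inner_smul_right] at this
    rw [← hW]
    linarith
  have : NeZero m := .of_pos hm
  obtain ⟨ℓ, R, hR, hsum⟩ := exists_column_of_le_sum_mul (fun i => ‖x i‖ ^ 2) y
    (fun i j => ⟪z i, a j⟫) hk hΛ hε (by linarith) hysparse hynorm hcorr
  rw [Fintype.card_fin, ← hW] at hsum
  exact ⟨ℓ, R, hR, hsum⟩

/-- Existence of a good column of the optimal dictionary: if the current fractional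
error ψ exceeds γ* + ε, then some dictionary column `a ℓ` has large thresholded
correlation with the residuals. -/
theorem stmt_9 (d n m k : ℕ) (hd : 0 < d) (hn : 0 < n) (hm : 0 < m) (hk : 0 < k)
    (Λ ε : ℝ) (hΛ : 0 < Λ) (hε : 0 < ε)
    (x : Fin n → EuclideanSpace ℝ (Fin d)) (hx : ∀ i, x i ≠ 0)
    (a : Fin m → EuclideanSpace ℝ (Fin d)) (ha : ∀ j, ‖a j‖ = 1)
    (y : Fin n → Fin m → ℝ)
    (hysparse : ∀ i, {j | y i j ≠ 0}.ncard ≤ k)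
    (hynorm : ∀ i, ∑ j, (y i j) ^ 2 ≤ Λ * ‖x i‖ ^ 2)
    (T : Fin n → Submodule ℝ (EuclideanSpace ℝ (Fin d)))
    (z : Fin n → EuclideanSpace ℝ (Fin d))
    (hz : ∀ i, z i = x i - (Submodule.orthogonalProjection (T i) (x i) : EuclideanSpace ℝ (Fin d)))
    (W : ℝ) (hW : W = ∑ i, ‖x i‖ ^ 2)
    (γ : Fin n → ℝ) (hγ : ∀ i, γ i = ‖x i - ∑ j, y i j • a j‖ ^ 2 / ‖x i‖ ^ 2)
    (γs : ℝ) (hγs : γs = (1 / W) * ∑ i, ‖x i‖ ^ 2 * γ i)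
    (ψ : ℝ) (hψ : ψ = (1 / W) * ∑ i, ‖z i‖ ^ 2)
    (hlarge : ψ ≥ γs + ε) :
    ∃ (ℓ : Fin m) (R : Finset (Fin n)),
      (∀ i ∈ R, (inner ℝ (z i) (a ℓ) : ℝ) ^ 2 ≥ (ε ^ 2 / (16 * k * Λ)) * ‖x i‖ ^ 2) ∧
      ∑ i ∈ R, (inner ℝ (z i) (a ℓ) : ℝ) ^ 2 ≥ ((ψ - γs) ^ 2 / (16 * m * Λ)) * W :=
  stmt_9_general d n m k hn hm hk Λ ε hΛ hε x hx a y hysparse hynorm T z hz W hW γ hγ γs hγs ψ hψ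
    hlarge
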